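/- arXiv:0910.1182 — 3 statements merged into one kernel-verified Lean document; each statement's English description precedes it below -/
import Mathlib

section
/- Let P ⊂ R^d be a d-simplex with integer vertices v_0,...,v_d. The δ-vector of P is shifted symmetric (δ_{d−i} = δ_{i+1} for 0 ≤ i ≤ ⌊(d−1)/2⌋) if and only if every facet of P has normalized volume 1 (i.e., is a unimodular (d−1)-simplex). -/
/-!
Write the lattice points of the cone over a face `S` in barycentric coordinates `w`; the height
of such a point is `∑ⱼ wⱼ`. Each splits uniquely into its fractional part, a lattice point of the
half-open fundamental parallelepiped, plus a nonnegative integer combination of the vertices of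
`S`. Hence `δ_k` counts the parallelepiped points of height `k`, and the normalized volume of a
face counts all its parallelepiped points: a facet is unimodular iff `0` is its only one.

On the parallelepiped of `P` the involution `b ↦ 𝟙_{supp b} - b` turns height `h` into
`|supp b| - h`. It matches the full-support points of heights `k` and `d + 1 - k`, so shifted
symmetry says that the remaining points, those of the facets, are equally many at heights `d - i`
and `i + 1`. For those the reflected height is at most `d - h`; a nonzero one of minimal height
`m` would, by the symmetry at heights `m` and `d + 1 - m`, force one of height `d + 1 - m`, whose
reflection has height `< m`.
-/

open scoped BigOperators Pointwise

noncomputable section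

/-- The lattice points of a subset of `ℝ^N`. -/
def latticePoints {N : ℕ} (P : Set (Fin N → ℝ)) : Set (Fin N → ℤ) :=
  {x | (fun i => (x i : ℝ)) ∈ P}

/-- The Ehrhart counting function `i(P,n) = |nP ∩ ℤ^N|`. -/
def ehrhart {N : ℕ} (P : Set (Fin N → ℝ)) (n : ℕ) : ℤ :=
  ((latticePoints ((n : ℝ) • P)).ncard : ℤ)

/-- The `i`-th entry of the Ehrhart δ-vector of a `d`-dimensional polytope,
i.e. the coefficient of `λ^i` in `(1-λ)^{d+1} · Σ_{n ≥ 0} i(P,n) λ^n`. -/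
def deltaVec {N : ℕ} (P : Set (Fin N → ℝ)) (d i : ℕ) : ℤ :=
  ∑ j ∈ Finset.range (i + 1),
    (-1 : ℤ) ^ (i - j) * (Nat.choose (d + 1) (i - j)) * ehrhart P j

/-- `P ⊆ ℝ^N` is an integral convex polytope of dimension `d`. -/
def IsIntegralPolytope {N : ℕ} (P : Set (Fin N → ℝ)) (d : ℕ) : Prop :=
  (∃ V : Finset (Fin N → ℤ),
      P = convexHull ℝ ((fun x => fun i => ((x i : ℤ) : ℝ)) '' (V : Set (Fin N → ℤ)))) ∧
    Module.finrank ℝ (affineSpan ℝ P).direction = d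

open Finset

theorem PowerSeries.coeff_one_sub_X_pow (R : Type*) [CommRing R] (n k : ℕ) :
    PowerSeries.coeff k ((1 - PowerSeries.X : PowerSeries R) ^ n) = (-1) ^ k * n.choose k := by
  have h : (1 - PowerSeries.X : PowerSeries R) ^ n =
      PowerSeries.rescale (-1) (((1 + Polynomial.X) ^ n : Polynomial R) : PowerSeries R) := by
    simp [sub_eq_add_neg]
  rw [h, PowerSeries.coeff_rescale, Polynomial.coeff_coe, Polynomial.coeff_one_add_X_pow]

/-- The coefficient of `X^i` in `X^h · (∑ₙ C(s+n, s) Xⁿ) · (1 - X)^(s+1) = X^h`. -/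
theorem sum_range_neg_one_pow_mul_choose_mul_ite_choose (s h i : ℕ) :
    ∑ j ∈ range (i + 1), (-1 : ℤ) ^ (i - j) * ((s + 1).choose (i - j) : ℤ) *
        (if h ≤ j then ((s + (j - h)).choose s : ℤ) else 0) = if i = h then 1 else 0 := by
  open PowerSeries in
  have key : X ^ h * PowerSeries.mk (fun n => ((s + n).choose s : ℤ)) * (1 - X) ^ (s + 1) =
      X ^ h := by
    rw [mul_assoc, mk_add_choose_mul_one_sub_pow_eq_one, mul_one]
  rw [← PowerSeries.coeff_X_pow, ← key, PowerSeries.coeff_mul,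
    Nat.sum_antidiagonal_eq_sum_range_succ_mk]
  refine sum_congr rfl fun j _ => ?_
  rw [PowerSeries.coeff_one_sub_X_pow, PowerSeries.coeff_X_pow_mul', PowerSeries.coeff_mk,
    mul_comm]

theorem Finset.card_piAntidiag_nat {ι : Type*} [DecidableEq ι] {s : Finset ι} (hs : s.Nonempty)
    (n : ℕ) : #(piAntidiag s n) = (#s - 1 + n).choose (#s - 1) := by
  have h := card_finsuppAntidiag_nat_eq_choose (s := s) n
  simp only [finsuppAntidiag, card_map, card_attach] at h
  rw [h, show #s + n - 1 = #s - 1 + n by have := hs.card_pos; omega, Nat.choose_symm_add]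

section ConvexHull

variable {ι E : Type*} [Fintype ι] [AddCommGroup E] [Module ℝ E]

theorem mem_convexHull_image_finset_iff (p : ι → E) (S : Finset ι) {x : E} :
    x ∈ convexHull ℝ (p '' S) ↔ ∃ w : ι → ℝ, (∀ j, 0 ≤ w j) ∧ (∀ j ∉ S, w j = 0) ∧
      ∑ j, w j = 1 ∧ ∑ j, w j • p j = x := by
  classical
  constructor
  · suffices h : convexHull ℝ (p '' S) ⊆ {x | ∃ w : ι → ℝ, (∀ j, 0 ≤ w j) ∧
        (∀ j ∉ S, w j = 0) ∧ ∑ j, w j = 1 ∧ ∑ j, w j • p j = x} from fun hx => h hx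
    refine convexHull_min ?_ ?_
    · rintro _ ⟨j, hj, rfl⟩
      refine ⟨Pi.single j 1, fun k => ?_, fun k hk => ?_, by simp, by simp⟩
      · by_cases hk : k = j <;> simp [hk]
      · simp [show k ≠ j by rintro rfl; exact hk hj]
    · rintro x ⟨w, hw0, hwS, hw1, rfl⟩ y ⟨w', hw0', hwS', hw1', rfl⟩ a b ha hb hab
      refine ⟨a • w + b • w', fun j => ?_, fun j hj => ?_, ?_, ?_⟩
      · simp only [Pi.add_apply, Pi.smul_apply, smul_eq_mul]
        exact add_nonneg (mul_nonneg ha (hw0 j)) (mul_nonneg hb (hw0' j))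
      · simp [hwS j hj, hwS' j hj]
      · simp [sum_add_distrib, ← mul_sum, hw1, hw1', hab]
      · simp [add_smul, sum_add_distrib, smul_sum, mul_smul]
  · rintro ⟨w, hw0, hwS, hw1, rfl⟩
    have hS : ∑ j ∈ S, w j = 1 := by
      rw [← hw1]; exact sum_subset (subset_univ S) fun j _ hj => hwS j hj
    have hx : S.centerMass w p = ∑ j, w j • p j := by
      rw [centerMass_eq_of_sum_1 _ _ hS]
      exact sum_subset (subset_univ S) fun j _ hj => by simp [hwS j hj]
    rw [← hx]
    exact S.centerMass_mem_convexHull (fun j _ => hw0 j) (by rw [hS]; exact one_pos)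
      fun j hj => ⟨j, hj, rfl⟩

theorem mem_smul_convexHull_image_finset_iff (p : ι → E) {S : Finset ι} (hS : S.Nonempty)
    {t : ℝ} (ht : 0 ≤ t) {x : E} :
    x ∈ t • convexHull ℝ (p '' S) ↔ ∃ w : ι → ℝ, (∀ j, 0 ≤ w j) ∧ (∀ j ∉ S, w j = 0) ∧
      ∑ j, w j = t ∧ ∑ j, w j • p j = x := by
  classical
  rcases ht.eq_or_lt with rfl | ht
  · obtain ⟨j, hj⟩ := hS
    have hne : (convexHull ℝ (p '' S)).Nonempty := ⟨p j, subset_convexHull ℝ _ ⟨j, hj, rfl⟩⟩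
    rw [Set.zero_smul_set hne, Set.mem_zero]
    constructor
    · rintro rfl
      exact ⟨0, fun _ => le_rfl, fun _ _ => rfl, by simp, by simp⟩
    · rintro ⟨w, hw0, -, hw1, rfl⟩
      have hw : ∀ j ∈ univ, w j = 0 := (sum_eq_zero_iff_of_nonneg fun j _ => hw0 j).1 hw1
      simp [hw]
  · rw [Set.mem_smul_set_iff_inv_smul_mem₀ ht.ne', mem_convexHull_image_finset_iff]
    constructor
    · rintro ⟨w, hw0, hwS, hw1, hx⟩
      refine ⟨t • w, fun j => mul_nonneg ht.le (hw0 j), fun j hj => by simp [hwS j hj],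
        by simp [← mul_sum, hw1], ?_⟩
      simp only [Pi.smul_apply, smul_eq_mul, mul_smul, ← smul_sum, hx, smul_inv_smul₀ ht.ne']
    · rintro ⟨w, hw0, hwS, hw1, rfl⟩
      refine ⟨t⁻¹ • w, fun j => mul_nonneg (inv_nonneg.2 ht.le) (hw0 j),
        fun j hj => by simp [hwS j hj], by simp [← mul_sum, hw1, ht.ne'], ?_⟩
      simp only [Pi.smul_apply, smul_eq_mul, mul_smul, ← smul_sum]

end ConvexHull

section LatticeSimplex

variable {ι : Type*} [Fintype ι] {N : ℕ}

/-- Barycentric coordinates, supported on the face `S`, of a lattice point `∑ⱼ wⱼ (vⱼ, 1)` of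
`ℤ^N × ℤ` in the cone over the simplex with vertices `v`. -/
structure IsLatticeWeight (v : ι → Fin N → ℤ) (S : Finset ι) (w : ι → ℝ) : Prop where
  nonneg : ∀ j, 0 ≤ w j
  eq_zero_of_notMem : ∀ j ∉ S, w j = 0
  exists_sum_eq : ∃ m : ℤ, ∑ j, w j = m
  exists_sum_mul_eq : ∀ i, ∃ z : ℤ, ∑ j, w j * v j i = z

/-- The lattice points of the half-open fundamental parallelepiped of the cone over the face `S`. -/
def boxPoints (v : ι → Fin N → ℤ) (S : Finset ι) : Set (ι → ℝ) :=
  {w | IsLatticeWeight v S w ∧ ∀ j, w j < 1}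

def height (w : ι → ℝ) : ℕ := ⌊∑ j, w j⌋₊

variable {v : ι → Fin N → ℤ} {S : Finset ι} {w b : ι → ℝ}

namespace IsLatticeWeight

theorem height_cast (hw : IsLatticeWeight v S w) : (height w : ℝ) = ∑ j, w j := by
  obtain ⟨m, hm⟩ := hw.exists_sum_eq
  have hm0 : (0 : ℝ) ≤ m := hm ▸ sum_nonneg fun j _ => hw.nonneg j
  lift m to ℕ using (by exact_mod_cast hm0)
  rw [height, hm, Int.cast_natCast, Nat.floor_natCast]

theorem add_intCast (hw : IsLatticeWeight v S w) (k : ι → ℤ) (hk : ∀ j ∉ S, k j = 0)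
    (hnonneg : ∀ j, 0 ≤ w j + k j) : IsLatticeWeight v S (fun j => w j + k j) where
  nonneg := hnonneg
  eq_zero_of_notMem j hj := by simp [hw.eq_zero_of_notMem j hj, hk j hj]
  exists_sum_eq := by
    obtain ⟨m, hm⟩ := hw.exists_sum_eq
    exact ⟨m + ∑ j, k j, by push_cast [sum_add_distrib, hm]; rfl⟩
  exists_sum_mul_eq i := by
    obtain ⟨z, hz⟩ := hw.exists_sum_mul_eq i
    exact ⟨z + ∑ j, k j * v j i, by push_cast [add_mul, sum_add_distrib, hz]; rfl⟩

theorem fract_mem_boxPoints (hw : IsLatticeWeight v S w) :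
    (fun j => Int.fract (w j)) ∈ boxPoints v S := by
  refine ⟨?_, fun j => Int.fract_lt_one _⟩
  have h := hw.add_intCast (fun j => -⌊w j⌋) (fun j hj => by simp [hw.eq_zero_of_notMem j hj])
    (fun j => by simpa using Int.floor_le (w j))
  simpa [← sub_eq_add_neg] using h

end IsLatticeWeight

theorem eq_of_sum_eq_of_sum_mul_eq (hv : AffineIndependent ℝ fun j i => (v j i : ℝ))
    {w w' : ι → ℝ} (hsum : ∑ j, w j = ∑ j, w' j)
    (hcomb : ∀ i, ∑ j, w j * v j i = ∑ j, w' j * v j i) : w = w' :=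
  funext fun j => hv.eq_of_sum_eq_sum hsum (funext fun i => by simpa using hcomb i) j (mem_univ j)

theorem boxPoints_finite (hv : AffineIndependent ℝ fun j i => (v j i : ℝ)) (S : Finset ι) :
    (boxPoints v S).Finite := by
  let C : Fin N → ℤ := fun i => ∑ j, |v j i|
  let Φ : (ι → ℝ) → (Fin N → ℤ) × ℤ := fun w => (fun i => ⌊∑ j, w j * v j i⌋, ⌊∑ j, w j⌋)
  have hΦ : Set.InjOn Φ (boxPoints v S) := by
    intro w hw w' hw' h
    simp only [Φ, Prod.mk.injEq, funext_iff] at h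
    refine eq_of_sum_eq_of_sum_mul_eq hv ?_ fun i => ?_
    · obtain ⟨m, hm⟩ := hw.1.exists_sum_eq
      obtain ⟨m', hm'⟩ := hw'.1.exists_sum_eq
      rw [hm, hm', Int.floor_intCast, Int.floor_intCast] at h
      rw [hm, hm', h.2]
    · obtain ⟨z, hz⟩ := hw.1.exists_sum_mul_eq i
      obtain ⟨z', hz'⟩ := hw'.1.exists_sum_mul_eq i
      have hi := h.1 i
      rw [hz, hz', Int.floor_intCast, Int.floor_intCast] at hi
      rw [hz, hz', hi]
  refine Set.Finite.of_finite_image (((Set.finite_Icc (-C) C).prod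
    (Set.finite_Icc (0 : ℤ) (Fintype.card ι))).subset ?_) hΦ
  rintro _ ⟨w, hw, rfl⟩
  have hw01 : ∀ j, 0 ≤ w j ∧ w j ≤ 1 := fun j => ⟨hw.1.nonneg j, (hw.2 j).le⟩
  have hcomb : ∀ i, |∑ j, w j * v j i| ≤ C i := fun i => by
    push_cast [C]
    refine (abs_sum_le_sum_abs _ _).trans (sum_le_sum fun j _ => ?_)
    rw [abs_mul, abs_of_nonneg (hw01 j).1]
    exact mul_le_of_le_one_left (abs_nonneg _) (hw01 j).2
  have hsum : ∑ j, w j ≤ Fintype.card ι := by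
    simpa using sum_le_sum fun j (_ : j ∈ univ) => (hw01 j).2
  refine ⟨⟨fun i => ?_, fun i => ?_⟩, ⟨?_, ?_⟩⟩
  · refine Int.le_floor.2 ?_
    rw [Pi.neg_apply, Int.cast_neg]
    linarith [neg_abs_le (∑ j, w j * v j i), hcomb i]
  · exact Int.floor_le_iff.2 (by linarith [le_abs_self (∑ j, w j * v j i), hcomb i])
  · exact Int.floor_nonneg.2 (sum_nonneg fun j _ => (hw01 j).1)
  · exact Int.floor_le_iff.2 (by push_cast; linarith)

theorem ehrhart_convexHull_eq_ncard (hv : AffineIndependent ℝ fun j i => (v j i : ℝ))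
    (hS : S.Nonempty) (n : ℕ) :
    ehrhart (convexHull ℝ ((fun j i => (v j i : ℝ)) '' S)) n =
      ({w | IsLatticeWeight v S w ∧ ∑ j, w j = n} : Set (ι → ℝ)).ncard := by
  let Φ : (ι → ℝ) → Fin N → ℤ := fun w i => ⌊∑ j, w j * v j i⌋
  have hΦ : ∀ w, IsLatticeWeight v S w → ∀ i, (Φ w i : ℝ) = ∑ j, w j * v j i := fun w hw i => by
    obtain ⟨z, hz⟩ := hw.exists_sum_mul_eq i
    simp only [Φ, hz, Int.floor_intCast]
  have himage : latticePoints ((n : ℝ) • convexHull ℝ ((fun j i => (v j i : ℝ)) '' S)) =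
      Φ '' {w | IsLatticeWeight v S w ∧ ∑ j, w j = n} := by
    ext x
    simp only [latticePoints, Set.mem_ofPred_eq,
      mem_smul_convexHull_image_finset_iff _ hS (Nat.cast_nonneg n), Set.mem_image, funext_iff,
      Finset.sum_apply, Pi.smul_apply, smul_eq_mul]
    constructor
    · rintro ⟨w, hw0, hwS, hwn, hwx⟩
      have hw : IsLatticeWeight v S w :=
        ⟨hw0, hwS, ⟨n, by rw [hwn]; rfl⟩, fun i => ⟨x i, hwx i⟩⟩
      exact ⟨w, ⟨hw, hwn⟩, fun i => by exact_mod_cast (hΦ w hw i).trans (hwx i)⟩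
    · rintro ⟨w, ⟨hw, hwn⟩, hwx⟩
      exact ⟨w, hw.nonneg, hw.eq_zero_of_notMem, hwn, fun i => by rw [← hwx i, hΦ w hw i]⟩
  have hinj : Set.InjOn Φ {w | IsLatticeWeight v S w ∧ ∑ j, w j = n} := by
    rintro w ⟨hw, hwn⟩ w' ⟨hw', hwn'⟩ h
    refine eq_of_sum_eq_of_sum_mul_eq hv (hwn.trans hwn'.symm) fun i => ?_
    rw [← hΦ w hw, ← hΦ w' hw', h]
  rw [ehrhart, himage, hinj.ncard_image]

theorem IsLatticeWeight.sum_add_natCast (hb : IsLatticeWeight v S b) {μ : ι → ℕ}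
    (hμ : ∀ j ∉ S, μ j = 0) : ∑ j, (b j + μ j) = ((height b + ∑ j ∈ S, μ j : ℕ) : ℝ) := by
  rw [sum_add_distrib, Nat.cast_add, Nat.cast_sum, hb.height_cast,
    sum_subset (subset_univ S) fun j _ hj => by simp [hμ j hj]]

theorem eq_and_eq_of_add_natCast_eq {b' : ι → ℝ} {μ μ' : ι → ℕ} (hb : b ∈ boxPoints v S)
    (hb' : b' ∈ boxPoints v S) (h : ∀ j, b j + μ j = b' j + μ' j) : b = b' ∧ μ = μ' := by
  have hb_eq : b = b' := funext fun j => by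
    have := congrArg Int.fract (h j)
    rwa [Int.fract_add_natCast, Int.fract_add_natCast, Int.fract_eq_self.2 ⟨hb.1.nonneg j, hb.2 j⟩,
      Int.fract_eq_self.2 ⟨hb'.1.nonneg j, hb'.2 j⟩] at this
  subst hb_eq
  exact ⟨rfl, funext fun j => by exact_mod_cast add_left_cancel (h j)⟩

theorem ncard_isLatticeWeight_sum_eq (hv : AffineIndependent ℝ fun j i => (v j i : ℝ))
    (hS : S.Nonempty) (n : ℕ) :
    ({w | IsLatticeWeight v S w ∧ ∑ j, w j = n} : Set (ι → ℝ)).ncard =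
      ∑ b ∈ (boxPoints_finite hv S).toFinset,
        if height b ≤ n then (#S - 1 + (n - height b)).choose (#S - 1) else 0 := by
  classical
  let T := (boxPoints_finite hv S).toFinset.sigma fun b =>
    if height b ≤ n then piAntidiag S (n - height b) else ∅
  let Ψ : (Σ _ : ι → ℝ, ι → ℕ) → ι → ℝ := fun p j => p.1 j + p.2 j
  have hT : ∀ p, p ∈ T ↔ p.1 ∈ boxPoints v S ∧ height p.1 + ∑ j ∈ S, p.2 j = n ∧
      ∀ j ∉ S, p.2 j = 0 := by
    rintro ⟨b, μ⟩
    simp only [T, mem_sigma, Set.Finite.mem_toFinset]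
    split_ifs with h
    · simp only [mem_piAntidiag, ne_eq, not_imp_comm (b := _ ∈ S), eq_tsub_iff_add_eq_of_le h,
        add_comm (S.sum μ)]
    · simp only [notMem_empty, false_iff, and_false, not_and]
      omega
  have himage : {w | IsLatticeWeight v S w ∧ ∑ j, w j = n} = Ψ '' T := by
    ext w
    constructor
    · rintro ⟨hw, hwn⟩
      have hμ : ∀ j ∉ S, ⌊w j⌋₊ = 0 := fun j hj => by simp [hw.eq_zero_of_notMem j hj]
      have hw_eq : ∀ j, w j = Int.fract (w j) + ⌊w j⌋₊ := fun j => by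
        rw [natCast_floor_eq_intCast_floor (hw.nonneg j), Int.fract_add_floor]
      refine ⟨⟨fun j => Int.fract (w j), fun j => ⌊w j⌋₊⟩,
        (hT _).2 ⟨hw.fract_mem_boxPoints, ?_, hμ⟩, funext fun j => (hw_eq j).symm⟩
      have h := hw.fract_mem_boxPoints.1.sum_add_natCast hμ
      simp only [← hw_eq, hwn] at h
      exact_mod_cast h.symm
    · rintro ⟨⟨b, μ⟩, hp, rfl⟩
      obtain ⟨hb, hsum, hμ⟩ := (hT _).1 hp
      refine ⟨hb.1.add_intCast (fun j => μ j) (by simpa using hμ)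
        (fun j => add_nonneg (hb.1.nonneg j) (by positivity)), ?_⟩
      simpa [hsum] using hb.1.sum_add_natCast hμ
  have hinj : Set.InjOn Ψ T := by
    rintro ⟨b, μ⟩ hp ⟨b', μ'⟩ hp' h
    obtain ⟨rfl, rfl⟩ := eq_and_eq_of_add_natCast_eq ((hT _).1 hp).1 ((hT _).1 hp').1 (congrFun h)
    rfl
  rw [himage, hinj.ncard_image, Set.ncard_coe_finset, card_sigma]
  refine sum_congr rfl fun b _ => ?_
  split_ifs <;> simp [card_piAntidiag_nat hS]

theorem setOf_height_eq_coe_filter (hv : AffineIndependent ℝ fun j i => (v j i : ℝ)) (k : ℕ) :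
    {b ∈ boxPoints v S | height b = k} =
      ↑((boxPoints_finite hv S).toFinset.filter (height · = k)) := by
  ext; simp

theorem deltaVec_convexHull_eq_ncard (hv : AffineIndependent ℝ fun j i => (v j i : ℝ))
    (hS : S.Nonempty) (k : ℕ) :
    deltaVec (convexHull ℝ ((fun j i => (v j i : ℝ)) '' S)) (#S - 1) k =
      ({b ∈ boxPoints v S | height b = k} : Set (ι → ℝ)).ncard := by
  simp only [deltaVec, ehrhart_convexHull_eq_ncard hv hS, ncard_isLatticeWeight_sum_eq hv hS,
    Nat.cast_sum, mul_sum]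
  rw [sum_comm, setOf_height_eq_coe_filter hv, Set.ncard_coe_finset, card_filter, Nat.cast_sum]
  refine sum_congr rfl fun b _ => ?_
  simpa [Nat.cast_ite, eq_comm] using
    sum_range_neg_one_pow_mul_choose_mul_ite_choose (#S - 1) (height b) k

theorem height_lt_card (hS : S.Nonempty) (hb : b ∈ boxPoints v S) : height b < #S := by
  have h : ∑ j ∈ S, b j < ∑ _j ∈ S, (1 : ℝ) := sum_lt_sum_of_nonempty hS fun j _ => hb.2 j
  rw [sum_subset (subset_univ S) fun j _ hj => hb.1.eq_zero_of_notMem j hj, ← hb.1.height_cast,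
    sum_const, nsmul_one] at h
  exact_mod_cast h

theorem sum_deltaVec_convexHull_eq_ncard (hv : AffineIndependent ℝ fun j i => (v j i : ℝ))
    (hS : S.Nonempty) :
    ∑ k ∈ range #S, deltaVec (convexHull ℝ ((fun j i => (v j i : ℝ)) '' S)) (#S - 1) k =
      (boxPoints v S).ncard := by
  have hfin := boxPoints_finite hv S
  simp only [deltaVec_convexHull_eq_ncard hv hS, setOf_height_eq_coe_filter hv,
    Set.ncard_coe_finset]
  rw [Set.ncard_eq_toFinset_card _ hfin, card_eq_sum_card_fiberwise fun b hb =>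
    mem_range.2 (height_lt_card hS (hfin.mem_toFinset.1 hb)), Nat.cast_sum]

end LatticeSimplex

def reflect {ι : Type*} (w : ι → ℝ) : ι → ℝ := fun j => if w j = 0 then 0 else 1 - w j

theorem reflect_apply {ι : Type*} (w : ι → ℝ) (j : ι) :
    reflect w j = (if w j = 0 then 0 else 1) - w j := by
  unfold reflect; split_ifs with h <;> simp [h]

section Reflection

variable {ι : Type*} [Fintype ι] {N : ℕ} {v : ι → Fin N → ℤ} {S : Finset ι} {b : ι → ℝ}

theorem zero_mem_boxPoints (v : ι → Fin N → ℤ) (S : Finset ι) : (0 : ι → ℝ) ∈ boxPoints v S :=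
  ⟨⟨fun _ => le_rfl, fun _ _ => rfl, ⟨0, by simp⟩, fun _ => ⟨0, by simp⟩⟩, fun _ => zero_lt_one⟩

theorem eq_zero_of_height_eq_zero (hb : b ∈ boxPoints v S) (h : height b = 0) : b = 0 := by
  have hsum : ∑ j, b j = 0 := by rw [← hb.1.height_cast, h, Nat.cast_zero]
  exact funext fun j => (sum_eq_zero_iff_of_nonneg fun j _ => hb.1.nonneg j).1 hsum j (mem_univ j)

theorem height_zero : height (0 : ι → ℝ) = 0 := by simp [height]

theorem mem_boxPoints_erase_iff [DecidableEq ι] {k : ι} :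
    b ∈ boxPoints v (univ.erase k) ↔ b ∈ boxPoints v univ ∧ b k = 0 := by
  refine ⟨fun ⟨hb, hb1⟩ => ⟨⟨⟨hb.nonneg, by simp, hb.exists_sum_eq, hb.exists_sum_mul_eq⟩, hb1⟩,
    hb.eq_zero_of_notMem k (notMem_erase k univ)⟩, fun ⟨⟨hb, hb1⟩, hbk⟩ => ⟨⟨hb.nonneg,
    fun j hj => ?_, hb.exists_sum_eq, hb.exists_sum_mul_eq⟩, hb1⟩⟩
  rw [mem_erase, not_and] at hj
  rwa [not_imp_not.1 hj (mem_univ j)]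

theorem reflect_eq_zero_iff (hb : b ∈ boxPoints v S) (j : ι) : reflect b j = 0 ↔ b j = 0 := by
  unfold reflect
  split_ifs with h
  · simp [h]
  · simpa [h] using sub_ne_zero.2 (hb.2 j).ne'

theorem reflect_eq_zero_iff_eq_zero (hb : b ∈ boxPoints v S) : reflect b = 0 ↔ b = 0 := by
  simp only [funext_iff, Pi.zero_apply, reflect_eq_zero_iff hb]

theorem reflect_reflect (hb : b ∈ boxPoints v S) : reflect (reflect b) = b := funext fun j => by
  by_cases h : b j = 0
  · rw [reflect, if_pos ((reflect_eq_zero_iff hb j).2 h), h]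
  · rw [reflect, if_neg (mt (reflect_eq_zero_iff hb j).1 h), reflect, if_neg h, sub_sub_cancel]

theorem reflect_mem_boxPoints (hb : b ∈ boxPoints v S) : reflect b ∈ boxPoints v S := by
  obtain ⟨⟨hb0, hbS, ⟨m, hm⟩, hbz⟩, hb1⟩ := hb
  have hind : ∀ c : ι → ℝ, ∑ j, reflect b j * c j = ∑ j ∈ {j | b j ≠ 0}, c j - ∑ j, b j * c j := by
    intro c
    simp only [reflect_apply, sub_mul, sum_sub_distrib, ite_mul, zero_mul, one_mul, sum_ite,
      sum_const_zero, zero_add]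
  refine ⟨⟨fun j => ?_, fun j hj => by simp [reflect, hbS j hj], ?_, fun i => ?_⟩, fun j => ?_⟩
  · unfold reflect; split_ifs <;> linarith [hb1 j]
  · refine ⟨#{j | b j ≠ 0} - m, ?_⟩
    simpa [hm] using hind 1
  · obtain ⟨z, hz⟩ := hbz i
    refine ⟨∑ j ∈ {j | b j ≠ 0}, v j i - z, ?_⟩
    simpa [hz] using hind fun j => (v j i : ℝ)
  · unfold reflect; split_ifs with h
    · exact zero_lt_one
    · linarith [lt_of_le_of_ne (hb0 j) (Ne.symm h)]

theorem height_reflect_add_height (hb : b ∈ boxPoints v S) :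
    height (reflect b) + height b = #{j | b j ≠ 0} := by
  have h : ∀ j, reflect b j + b j = if b j ≠ 0 then 1 else 0 := fun j => by
    unfold reflect; split_ifs <;> simp_all
  have hsum := sum_congr rfl fun j (_ : j ∈ univ) => h j
  rw [sum_add_distrib, sum_boole, ← (reflect_mem_boxPoints hb).1.height_cast,
    ← hb.1.height_cast] at hsum
  exact_mod_cast hsum

variable {d : ℕ}

theorem height_reflect_add_height_of_forall_ne_zero (hcard : Fintype.card ι = d + 1)
    (hb : b ∈ boxPoints v S) (hfull : ∀ j, b j ≠ 0) : height (reflect b) + height b = d + 1 := by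
  rw [height_reflect_add_height hb, filter_true_of_mem fun j _ => hfull j, card_univ, hcard]

theorem height_reflect_add_height_le (hcard : Fintype.card ι = d + 1) (hb : b ∈ boxPoints v S)
    {k : ι} (hk : b k = 0) : height (reflect b) + height b ≤ d := by
  have := card_lt_univ_of_notMem (s := {j | b j ≠ 0}) (by simpa using hk)
  rw [height_reflect_add_height hb]
  omega

theorem ncard_height_eq_of_forall_ne_zero (hcard : Fintype.card ι = d + 1) {k l : ℕ}
    (hkl : k + l = d + 1) :
    {b ∈ boxPoints v univ | height b = k ∧ ∀ j, b j ≠ 0}.ncard =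
      {b ∈ boxPoints v univ | height b = l ∧ ∀ j, b j ≠ 0}.ncard := by
  have hmaps : ∀ {k l}, k + l = d + 1 →
      ∀ b ∈ {b ∈ boxPoints v univ | height b = k ∧ ∀ j, b j ≠ 0},
      reflect b ∈ {b ∈ boxPoints v univ | height b = l ∧ ∀ j, b j ≠ 0} := by
    rintro k l hkl b ⟨hb, hbk, hfull⟩
    have := height_reflect_add_height_of_forall_ne_zero hcard hb hfull
    exact ⟨reflect_mem_boxPoints hb, by omega, fun j => mt (reflect_eq_zero_iff hb j).1 (hfull j)⟩
  refine Set.ncard_congr (fun b _ => reflect b) (hmaps hkl) (fun b b' hb hb' h => ?_)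
    fun b hb => ⟨reflect b, hmaps (by omega) b hb, reflect_reflect hb.1⟩
  rw [← reflect_reflect hb.1, h, reflect_reflect hb'.1]

theorem ncard_height_eq_add (hv : AffineIndependent ℝ fun j i => (v j i : ℝ)) (k : ℕ) :
    {b ∈ boxPoints v univ | height b = k}.ncard =
      {b ∈ boxPoints v univ | height b = k ∧ ∀ j, b j ≠ 0}.ncard +
        {b ∈ boxPoints v univ | height b = k ∧ ∃ j, b j = 0}.ncard := by
  rw [← Set.ncard_inter_add_ncard_sdiff_eq_ncard _ {b | ∀ j, b j ≠ 0}
    ((boxPoints_finite hv univ).sep _)]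
  congr 2 <;> ext b <;> simp +contextual [and_assoc]

theorem ncard_height_symm_of_eq_zero (hv : AffineIndependent ℝ fun j i => (v j i : ℝ))
    (hd : 1 ≤ d) (hcard : Fintype.card ι = d + 1)
    (hzero : ∀ b ∈ boxPoints v univ, (∃ j, b j = 0) → b = 0) {i : ℕ} (hi : i ≤ (d - 1) / 2) :
    {b ∈ boxPoints v univ | height b = d - i}.ncard =
      {b ∈ boxPoints v univ | height b = i + 1}.ncard := by
  have hempty : ∀ k, 1 ≤ k → {b ∈ boxPoints v univ | height b = k ∧ ∃ j, b j = 0} = ∅ :=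
    fun k hk => Set.eq_empty_of_forall_notMem fun b ⟨hb, hbk, hbz⟩ => by
      rw [hzero b hb hbz, height_zero] at hbk
      omega
  rw [ncard_height_eq_add hv, ncard_height_eq_add hv, hempty _ (by omega), hempty _ (by omega),
    ncard_height_eq_of_forall_ne_zero hcard (by omega : d - i + (i + 1) = d + 1)]

theorem eq_zero_of_ncard_height_symm (hv : AffineIndependent ℝ fun j i => (v j i : ℝ))
    (hcard : Fintype.card ι = d + 1)
    (hsymm : ∀ i ≤ (d - 1) / 2, {b ∈ boxPoints v univ | height b = d - i}.ncard =
      {b ∈ boxPoints v univ | height b = i + 1}.ncard)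
    (hb : b ∈ boxPoints v univ) (hbz : ∃ j, b j = 0) : b = 0 := by
  classical
  by_contra hne
  let IsBad : (ι → ℝ) → Prop := fun b => b ∈ boxPoints v univ ∧ (∃ j, b j = 0) ∧ b ≠ 0
  have hex : ∃ m, ∃ b, IsBad b ∧ height b = m := ⟨_, b, ⟨hb, hbz, hne⟩, rfl⟩
  obtain ⟨b₀, hb₀, hm⟩ := Nat.find_spec hex
  set m := Nat.find hex
  have hmin : ∀ b, IsBad b → m ≤ height b := fun b hb => Nat.find_min' hex ⟨b, hb, rfl⟩
  have hreflect : ∀ b, IsBad b → IsBad (reflect b) ∧ height (reflect b) + height b ≤ d := by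
    rintro b ⟨hb, ⟨k, hk⟩, hne⟩
    exact ⟨⟨reflect_mem_boxPoints hb, ⟨k, (reflect_eq_zero_iff hb k).2 hk⟩,
      mt (reflect_eq_zero_iff_eq_zero hb).1 hne⟩, height_reflect_add_height_le hcard hb hk⟩
  have hm₁ : 1 ≤ m := by
    rw [← hm]
    exact Nat.pos_of_ne_zero fun h => hb₀.2.2 (eq_zero_of_height_eq_zero hb₀.1 h)
  have h2m : 2 * m ≤ d := by
    have := hmin _ (hreflect b₀ hb₀).1
    have := (hreflect b₀ hb₀).2
    omega
  have hcount := hsymm (m - 1) (by omega)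
  rw [ncard_height_eq_add hv, ncard_height_eq_add hv, Nat.sub_add_cancel hm₁,
    ncard_height_eq_of_forall_ne_zero hcard (by omega : d - (m - 1) + m = d + 1),
    Nat.add_left_cancel_iff] at hcount
  obtain ⟨b₁, hb₁, hb₁m, hb₁z⟩ := (Set.ncard_pos ((boxPoints_finite hv univ).sep _)).1 <| by
    rw [hcount]
    exact (Set.ncard_pos ((boxPoints_finite hv univ).sep _)).2 ⟨b₀, hb₀.1, hm, hb₀.2.1⟩
  have hbad₁ : IsBad b₁ := ⟨hb₁, hb₁z, fun h => by rw [h, height_zero] at hb₁m; omega⟩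
  have := hmin _ (hreflect b₁ hbad₁).1
  have := (hreflect b₁ hbad₁).2
  omega

theorem forall_ncard_boxPoints_erase_eq_one_iff [DecidableEq ι] :
    (∀ k, (boxPoints v (univ.erase k)).ncard = 1) ↔
      ∀ b ∈ boxPoints v univ, (∃ j, b j = 0) → b = 0 := by
  simp only [Set.ncard_eq_one]
  constructor
  · rintro h b hb ⟨k, hk⟩
    obtain ⟨a, ha⟩ := h k
    have h0 := zero_mem_boxPoints v (univ.erase k)
    have hb' : b ∈ boxPoints v (univ.erase k) := mem_boxPoints_erase_iff.2 ⟨hb, hk⟩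
    rw [ha, Set.mem_singleton_iff] at h0 hb'
    rw [hb', h0]
  · refine fun h k => ⟨0, Set.eq_singleton_iff_unique_mem.2 ⟨zero_mem_boxPoints v _, ?_⟩⟩
    intro b hb
    obtain ⟨hb, hbk⟩ := mem_boxPoints_erase_iff.1 hb
    exact h b hb ⟨k, hbk⟩

end Reflection

theorem stmt8 (d : ℕ) (hd : 1 ≤ d) (v : Fin (d + 1) → Fin d → ℤ)
    (hv : AffineIndependent ℝ (fun j => fun i => ((v j i : ℤ) : ℝ)))
    (P : Set (Fin d → ℝ))
    (hP : P = convexHull ℝ (Set.range fun j => fun i => ((v j i : ℤ) : ℝ))) :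
    (∀ i ≤ (d - 1) / 2, deltaVec P d (d - i) = deltaVec P d (i + 1)) ↔
      ∀ k : Fin (d + 1),
        ∑ i ∈ Finset.range d,
          deltaVec (convexHull ℝ ((fun j => fun i => ((v j i : ℤ) : ℝ)) '' {j | j ≠ k}))
            (d - 1) i = 1 := by
  have hdelta : ∀ i, deltaVec P d i = {b ∈ boxPoints v univ | height b = i}.ncard := fun i => by
    simpa [hP] using deltaVec_convexHull_eq_ncard hv univ_nonempty i
  have hfacet : ∀ k : Fin (d + 1),
      ∑ i ∈ range d, deltaVec (convexHull ℝ ((fun j i => (v j i : ℝ)) '' {j | j ≠ k})) (d - 1) i =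
        (boxPoints v (univ.erase k)).ncard := fun k => by
    have hcard : #(univ.erase k) = d := by simp
    have hS : (univ.erase k).Nonempty := by rw [← card_pos, hcard]; omega
    have hset : {j | j ≠ k} = ((univ.erase k : Finset (Fin (d + 1))) : Set (Fin (d + 1))) := by
      ext; simp
    rw [hset]
    simpa only [hcard] using sum_deltaVec_convexHull_eq_ncard hv hS
  simp only [hdelta, hfacet, Nat.cast_inj, Nat.cast_eq_one, forall_ncard_boxPoints_erase_eq_one_iff]
  exact ⟨fun h b hb hbz => eq_zero_of_ncard_height_symm hv (Fintype.card_fin _) h hb hbz,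
    fun h i hi => ncard_height_symm_of_eq_zero hv hd (Fintype.card_fin _) h hi⟩
end
end

section
/- Let P be an integral d-simplex whose normalized volume is a prime number p. If min{i > 0 : δ_i ≠ 0} = d + 1 − max{i : δ_i ≠ 0}, then the δ-vector of P is shifted symmetric, i.e., δ_{d−i} = δ_{i+1} for all 0 ≤ i ≤ ⌊(d−1)/2⌋. -/
open scoped BigOperators Pointwise

noncomputable section

/-!
Write `P = conv(v₀, …, v_d)` and consider the cone over `P` at height one. For a simplex, `δᵢ`
counts the lattice points of height `i` in the half-open fundamental parallelepiped of that cone: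
in coordinates, the `r ∈ [0,1)^(d+1)` with `∑ rⱼ vⱼ ∈ ℤ^N` and `∑ rⱼ ∈ ℤ`, the height being
`∑ rⱼ`. In particular the normalized volume `p` is the number of such box points. Addition
modulo `ℤ^(d+1)` makes the box points a group of order `p`, and `r ↦ {-r}` satisfies
`height r + height {-r} = #supp r`. For a box point `y` of maximal height `m`, the hypothesis
`min = d + 1 - m` forces `#supp y = d + 1`. Since `p` is prime, a coordinate projection of the
group to `ℝ/ℤ` that does not vanish at `y` is injective, so every nonzero box point has full
support; then `r ↦ {-r}` exchanges the box points of heights `i + 1` and `d - i`.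
-/

theorem PowerSeries.coeff_one_sub_X_pow_s9 (n m : ℕ) :
    coeff m ((1 - X : PowerSeries ℤ) ^ n) = (-1) ^ m * n.choose m := by
  have h : (1 - X : PowerSeries ℤ) ^ n =
      rescale (-1) (((1 + Polynomial.X) ^ n : Polynomial ℤ) : PowerSeries ℤ) := by
    simp [sub_eq_add_neg]
  rw [h, coeff_rescale, Polynomial.coeff_coe, Polynomial.coeff_one_add_X_pow]

theorem convexHull_range_eq_image_stdSimplex {ι E : Type*} [Fintype ι] [AddCommGroup E]
    [Module ℝ E] (w : ι → E) :
    convexHull ℝ (Set.range w) = Fintype.linearCombination ℝ w '' stdSimplex ℝ ι := by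
  classical
  rw [← convexHull_basis_eq_stdSimplex, LinearMap.image_convexHull, ← Set.range_comp]
  congr
  ext i
  simp [Fintype.linearCombination_apply]

theorem smul_stdSimplex {ι : Type*} [Fintype ι] [Nonempty ι] {c : ℝ} (hc : 0 ≤ c) :
    c • stdSimplex ℝ ι = {l | (∀ j, 0 ≤ l j) ∧ ∑ j, l j = c} := by
  classical
  ext l
  rcases hc.eq_or_lt with rfl | hc
  · rw [Set.zero_smul_set ⟨_, single_mem_stdSimplex ℝ (Classical.arbitrary ι)⟩, Set.mem_zero]
    constructor
    · rintro rfl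
      simp
    · rintro ⟨h0, h1⟩
      ext j
      exact (Finset.sum_eq_zero_iff_of_nonneg fun j _ => h0 j).1 h1 j (Finset.mem_univ j)
  · rw [Set.mem_smul_set_iff_inv_smul_mem₀ hc.ne']
    simp [stdSimplex, ← Finset.mul_sum, inv_mul_eq_one₀ hc.ne', eq_comm (a := c), hc,
      mul_nonneg_iff_of_pos_left]

theorem Int.self_add_fract_neg {x : ℝ} (hx : x ∈ Set.Ico 0 1) :
    x + Int.fract (-x) = if x = 0 then 0 else 1 := by
  split_ifs with h
  · simp [h]
  · rw [Int.fract_neg (by rwa [Int.fract_eq_self.2 hx]), Int.fract_eq_self.2 hx]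
    ring

theorem AddMonoidHom.map_ne_zero_of_prime_card {G M : Type*} [AddGroup G] [AddGroup M]
    (hG : (Nat.card G).Prime) (f : G →+ M) {g h : G} (hg : f g ≠ 0) (hh : h ≠ 0) : f h ≠ 0 := by
  have := Fact.mk hG
  rcases f.ker.eq_bot_or_eq_top_of_prime_card with hk | hk
  · exact fun hfh => hh (f.ker_eq_bot_iff.1 hk (hfh.trans f.map_zero.symm))
  · exact absurd (f.mem_ker.1 (hk ▸ AddSubgroup.mem_top g)) hg

instance finite_add_sum_eq (k m n : ℕ) : Finite {a : Fin (k + 1) → ℕ // m + ∑ j, a j = n} :=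
  Finite.of_injective
    (fun a j => (⟨a.1 j, Nat.lt_succ_of_le <| (Finset.single_le_sum (fun _ _ => Nat.zero_le _)
      (Finset.mem_univ j)).trans (by have := a.2; omega)⟩ : Fin (n + 1)))
    fun a b h => Subtype.ext <| funext fun j => by simpa using congrFun h j

theorem natCard_add_sum_eq (k m n : ℕ) :
    Nat.card {a : Fin (k + 1) → ℕ // m + ∑ j, a j = n} =
      if m ≤ n then (n - m + k).choose k else 0 := by
  split_ifs with h
  · have e : {a : Fin (k + 1) → ℕ // m + ∑ j, a j = n} ≃ Sym (Fin (k + 1)) (n - m) :=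
      (Equiv.subtypeEquivRight fun a => by omega).trans (Sym.equivNatSumOfFintype _ _).symm
    rw [Nat.card_congr e, Nat.card_eq_fintype_card, Sym.card_sym_eq_choose, Fintype.card_fin,
      show k + 1 + (n - m) - 1 = n - m + k by omega, Nat.choose_symm_add]
  · have : IsEmpty {a : Fin (k + 1) → ℕ // m + ∑ j, a j = n} := ⟨fun a => h (by omega)⟩
    exact Nat.card_of_isEmpty

namespace IntegralSimplex

open PowerSeries in
theorem sum_alternating_choose_eq_coeff (f : ℕ → ℤ) (d i : ℕ) :
    ∑ j ∈ Finset.range (i + 1), (-1) ^ (i - j) * ((d + 1).choose (i - j) : ℤ) * f j =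
      coeff i ((1 - X) ^ (d + 1) * mk f) := by
  rw [coeff_mul, Finset.Nat.sum_antidiagonal_eq_sum_range_succ
    (fun a b => coeff a ((1 - X : PowerSeries ℤ) ^ (d + 1)) * coeff b (mk f)),
    ← Finset.sum_range_reflect]
  refine Finset.sum_congr rfl fun j hj => ?_
  have hj : j ≤ i := Nat.lt_succ_iff.mp (Finset.mem_range.mp hj)
  rw [coeff_one_sub_X_pow_s9, coeff_mk, show i + 1 - 1 - j = i - j by omega,
    show i - (i - j) = j by omega]

open PowerSeries in
theorem one_sub_X_pow_mul_mk {ι : Type*} [Fintype ι] (deg : ι → ℕ) (d : ℕ) (f : ℕ → ℤ)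
    (hf : ∀ n, f n = ∑ a, if deg a ≤ n then ((n - deg a + d).choose d : ℤ) else 0) :
    (1 - X) ^ (d + 1) * mk f = ∑ a, X ^ deg a := by
  have hmk : mk f = ∑ a, X ^ deg a * mk fun n => ((d + n).choose d : ℤ) := by
    ext n
    simp only [coeff_mk, hf, map_sum, coeff_X_pow_mul']
    refine Finset.sum_congr rfl fun a _ => ?_
    split_ifs <;> simp [add_comm]
  rw [hmk, Finset.mul_sum]
  refine Finset.sum_congr rfl fun a _ => ?_
  rw [mul_left_comm, mul_comm ((1 - X) ^ (d + 1)), mk_add_choose_mul_one_sub_pow_eq_one, mul_one]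

open PowerSeries in
theorem sum_alternating_choose_eq_natCard {ι : Type*} [Fintype ι] (deg : ι → ℕ) (d i : ℕ) :
    ∑ j ∈ Finset.range (i + 1), (-1) ^ (i - j) * ((d + 1).choose (i - j) : ℤ) *
        ∑ a, (if deg a ≤ j then ((j - deg a + d).choose d : ℤ) else 0) =
      Nat.card {a // deg a = i} := by
  rw [sum_alternating_choose_eq_coeff, one_sub_X_pow_mul_mk deg d _ fun _ => rfl, map_sum]
  simp only [coeff_X_pow]
  rw [Finset.sum_boole, Nat.card_eq_fintype_card, Fintype.card_subtype]
  simp [eq_comm]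

def intPoints (ι : Type*) : AddSubgroup (ι → ℝ) :=
  (AddMonoidHom.compLeft (Int.castAddHom ℝ) ι).range

def deg {ι : Type*} [Fintype ι] (r : ι → ℝ) : ℕ := ⌊∑ j, r j⌋₊

def fractVec {ι : Type*} (l : ι → ℝ) : ι → ℝ := fun j => Int.fract (l j)

variable {N d : ℕ} (v : Fin (d + 1) → Fin N → ℤ)

def vertexCombination : (Fin (d + 1) → ℝ) →ₗ[ℝ] Fin N → ℝ :=
  Fintype.linearCombination ℝ fun j i => (v j i : ℝ)

/-- The `l` with `∑ lⱼ (vⱼ, 1) ∈ ℤ^N × ℤ`: the lattice of the cone over the simplex, written in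
the basis `(vⱼ, 1)`. -/
def coordLattice : AddSubgroup (Fin (d + 1) → ℝ) :=
  (intPoints (Fin N)).comap (vertexCombination v).toAddMonoidHom ⊓
    (Int.castAddHom ℝ).range.comap (∑ j, Pi.evalAddMonoidHom (fun _ => ℝ) j)

/-- The lattice points of the half-open fundamental parallelepiped of the cone; their height is
`deg`. -/
def box : Set (Fin (d + 1) → ℝ) := {r | r ∈ coordLattice v ∧ ∀ j, r j ∈ Set.Ico 0 1}

def dilateCoords (n : ℕ) : Set (Fin (d + 1) → ℝ) :=
  {l | (∀ j, 0 ≤ l j) ∧ ∑ j, l j = n ∧ vertexCombination v l ∈ intPoints (Fin N)}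

variable {v}

theorem mem_coordLattice {l : Fin (d + 1) → ℝ} :
    l ∈ coordLattice v ↔ vertexCombination v l ∈ intPoints (Fin N) ∧ ∃ k : ℤ, (k : ℝ) = ∑ j, l j := by
  simp only [coordLattice, AddSubgroup.mem_inf, AddSubgroup.mem_comap,
    AddMonoidHom.mem_range, AddMonoidHom.finsetSum_apply, Pi.evalAddMonoidHom_apply]
  rfl

theorem intCast_mem_coordLattice (z : Fin (d + 1) → ℤ) :
    (fun j => (z j : ℝ)) ∈ coordLattice v := by
  refine mem_coordLattice.2 ⟨⟨∑ j, z j • v j, ?_⟩, ∑ j, z j, by push_cast; rfl⟩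
  ext i
  simp [vertexCombination, Fintype.linearCombination_apply]

theorem natCast_mem_coordLattice (a : Fin (d + 1) → ℕ) :
    (fun j => (a j : ℝ)) ∈ coordLattice v := by
  simpa using intCast_mem_coordLattice (v := v) fun j => (a j : ℤ)

theorem mem_coordLattice_of_mem_dilateCoords {n : ℕ} {l : Fin (d + 1) → ℝ}
    (hl : l ∈ dilateCoords v n) : l ∈ coordLattice v :=
  mem_coordLattice.2 ⟨hl.2.2, n, by rw [hl.2.1]; rfl⟩

theorem fractVec_mem_box {l : Fin (d + 1) → ℝ} (hl : l ∈ coordLattice v) :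
    fractVec l ∈ box v := by
  refine ⟨?_, fun j => ⟨Int.fract_nonneg _, Int.fract_lt_one _⟩⟩
  have h : fractVec l = l - fun j => ((⌊l j⌋ : ℤ) : ℝ) := rfl
  rw [h]
  exact sub_mem hl (intCast_mem_coordLattice _)

theorem zero_mem_box : 0 ∈ box v := ⟨zero_mem _, fun _ => ⟨le_rfl, zero_lt_one⟩⟩

theorem cast_deg {r : Fin (d + 1) → ℝ} (hr : r ∈ box v) : (deg r : ℝ) = ∑ j, r j := by
  obtain ⟨k, hk⟩ := (mem_coordLattice.1 hr.1).2
  have hk0 : 0 ≤ k := by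
    exact_mod_cast hk ▸ Finset.sum_nonneg fun j _ => (hr.2 j).1
  lift k to ℕ using hk0
  rw [deg, ← hk, Int.cast_natCast, Nat.floor_natCast]

theorem deg_le {r : Fin (d + 1) → ℝ} (hr : r ∈ box v) : deg r ≤ d := by
  have h : (deg r : ℝ) < d + 1 := by
    calc (deg r : ℝ) = ∑ j, r j := cast_deg hr
      _ < ∑ _j : Fin (d + 1), (1 : ℝ) :=
        Finset.sum_lt_sum_of_nonempty Finset.univ_nonempty fun j _ => (hr.2 j).2
      _ = d + 1 := by simp
  exact_mod_cast Nat.lt_succ_iff.mp (by exact_mod_cast h)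

theorem deg_eq_zero_iff {r : Fin (d + 1) → ℝ} (hr : r ∈ box v) : deg r = 0 ↔ r = 0 := by
  rw [← Nat.cast_eq_zero (R := ℝ), cast_deg hr,
    Finset.sum_eq_zero_iff_of_nonneg fun j _ => (hr.2 j).1, funext_iff]
  simp

theorem vertexCombination_injOn (hv : AffineIndependent ℝ fun j i => (v j i : ℝ)) (c : ℝ) :
    Set.InjOn (vertexCombination v) {l | ∑ j, l j = c} := fun l hl m hm h =>
  funext fun j => hv.eq_of_sum_eq_sum (hl.trans hm.symm)
    (by simpa [vertexCombination, Fintype.linearCombination_apply] using h) j (Finset.mem_univ j)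

theorem vertexCombination_mem_image_pi_Icc {r : Fin (d + 1) → ℝ} (hr : r ∈ box v) :
    vertexCombination v r ∈ (fun (z : Fin N → ℤ) i => (z i : ℝ)) ''
      Set.univ.pi fun i => Set.Icc (-∑ j, |v j i|) (∑ j, |v j i|) := by
  obtain ⟨z, hz⟩ := (mem_coordLattice.1 hr.1).1
  refine ⟨z, fun i _ => abs_le.1 ?_, hz⟩
  have hzi : (z i : ℝ) = ∑ j, r j * v j i := by
    simpa [vertexCombination, Fintype.linearCombination_apply] using congrFun hz i
  have h : |(z i : ℝ)| ≤ ∑ j, (|v j i| : ℝ) := by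
    rw [hzi]
    refine (Finset.abs_sum_le_sum_abs _ _).trans (Finset.sum_le_sum fun j _ => ?_)
    rw [abs_mul, abs_of_nonneg (hr.2 j).1]
    exact mul_le_of_le_one_left (abs_nonneg _) (hr.2 j).2.le
  exact_mod_cast h

theorem box_finite (hv : AffineIndependent ℝ fun j i => (v j i : ℝ)) : (box v).Finite := by
  refine Set.Finite.of_finite_image (f := fun r => (vertexCombination v r, deg r)) ?_ ?_
  · have hbound := (Set.Finite.pi fun i => Set.finite_Icc (-∑ j, |v j i|) (∑ j, |v j i|)).image
      fun (z : Fin N → ℤ) i => (z i : ℝ)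
    refine (hbound.prod (Set.finite_Iic d)).subset ?_
    rintro _ ⟨r, hr, rfl⟩
    exact ⟨vertexCombination_mem_image_pi_Icc hr, deg_le hr⟩
  · intro r hr s hs h
    simp only [Prod.mk.injEq] at h
    exact vertexCombination_injOn hv (deg r) (cast_deg hr).symm (h.2 ▸ (cast_deg hs).symm) h.1

theorem ehrhart_eq_ncard_dilateCoords (hv : AffineIndependent ℝ fun j i => (v j i : ℝ))
    {P : Set (Fin N → ℝ)} (hP : P = convexHull ℝ (Set.range fun j i => (v j i : ℝ))) (n : ℕ) :
    ehrhart P n = (dilateCoords v n).ncard := by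
  have hdil : (n : ℝ) • P = vertexCombination v '' {l | (∀ j, 0 ≤ l j) ∧ ∑ j, l j = n} := by
    rw [hP, convexHull_range_eq_image_stdSimplex, ← image_smul_set,
      smul_stdSimplex (Nat.cast_nonneg n), vertexCombination]
  have hcast : Function.Injective fun (z : Fin N → ℤ) i => (z i : ℝ) :=
    fun z z' h => funext fun i => by simpa using congrFun h i
  rw [ehrhart, latticePoints, ← Set.ncard_image_of_injective _ hcast,
    ← ((vertexCombination_injOn hv n).mono fun l hl => hl.2.1).ncard_image]
  congr 2
  change _ '' (_ ⁻¹' _) = _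
  rw [Set.image_preimage_eq_inter_range, hdil, ← Set.image_inter_preimage]
  exact congrArg _ (Set.ext fun _ => and_assoc)

/-- A point of the `n`-th dilate is its fractional part, a box point, plus its integer part. -/
def dilateCoordsEquiv (v : Fin (d + 1) → Fin N → ℤ) (n : ℕ) :
    dilateCoords v n ≃
      Σ r : box v, {a : Fin (d + 1) → ℕ // deg (r : Fin (d + 1) → ℝ) + ∑ j, a j = n} where
  toFun l := ⟨⟨fractVec l, fractVec_mem_box (mem_coordLattice_of_mem_dilateCoords l.2)⟩,
    ⟨fun j => ⌊l.1 j⌋₊, by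
      have h : ∀ j, Int.fract (l.1 j) + ⌊l.1 j⌋₊ = l.1 j := fun j => by
        rw [natCast_floor_eq_intCast_floor (l.2.1 j), Int.fract_add_floor]
      have hsum : (deg (fractVec l.1) : ℝ) + ∑ j, (⌊l.1 j⌋₊ : ℝ) = n := by
        rw [cast_deg (fractVec_mem_box (mem_coordLattice_of_mem_dilateCoords l.2)),
          ← Finset.sum_add_distrib, ← l.2.2.1]
        exact Finset.sum_congr rfl fun j _ => h j
      exact_mod_cast hsum⟩⟩
  invFun x := ⟨x.1.1 + fun j => (x.2.1 j : ℝ), fun j => add_nonneg (x.1.2.2 j).1 (Nat.cast_nonneg _),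
    by
      simp only [Pi.add_apply]
      rw [Finset.sum_add_distrib, ← cast_deg x.1.2]
      exact_mod_cast x.2.2,
    (mem_coordLattice.1 (add_mem x.1.2.1 (natCast_mem_coordLattice x.2.1))).1⟩
  left_inv l := Subtype.ext <| funext fun j => by
    simp only [fractVec, Pi.add_apply]
    rw [natCast_floor_eq_intCast_floor (l.2.1 j), Int.fract_add_floor]
  right_inv x := by
    have hr : ∀ j, x.1.1 j ∈ Set.Ico 0 1 := x.1.2.2
    refine Sigma.subtype_ext (Subtype.ext <| funext fun j => ?_) (funext fun j => ?_)
    · simp [fractVec, Int.fract_eq_self.2 (hr j)]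
    · simp [Nat.floor_add_natCast (hr j).1, Nat.floor_eq_zero.2 (hr j).2]

theorem ehrhart_eq_sum_box [Fintype (box v)] (hv : AffineIndependent ℝ fun j i => (v j i : ℝ))
    {P : Set (Fin N → ℝ)} (hP : P = convexHull ℝ (Set.range fun j i => (v j i : ℝ))) (n : ℕ) :
    ehrhart P n = ∑ r : box v, if deg r.1 ≤ n then ((n - deg r.1 + d).choose d : ℤ) else 0 := by
  rw [ehrhart_eq_ncard_dilateCoords hv hP, ← Nat.card_coe_set_eq,
    Nat.card_congr (dilateCoordsEquiv v n), Nat.card_sigma, Nat.cast_sum]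
  simp only [natCard_add_sum_eq]
  push_cast
  rfl

theorem deltaVec_eq_natCard (hv : AffineIndependent ℝ fun j i => (v j i : ℝ))
    {P : Set (Fin N → ℝ)} (hP : P = convexHull ℝ (Set.range fun j i => (v j i : ℝ))) (i : ℕ) :
    deltaVec P d i = Nat.card {r : box v // deg r.1 = i} := by
  have := (box_finite hv).fintype
  simp only [deltaVec, ehrhart_eq_sum_box hv hP]
  exact sum_alternating_choose_eq_natCard _ d i

theorem sum_deltaVec_eq_natCard_box (hv : AffineIndependent ℝ fun j i => (v j i : ℝ))
    {P : Set (Fin N → ℝ)} (hP : P = convexHull ℝ (Set.range fun j i => (v j i : ℝ))) :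
    ∑ i ∈ Finset.range (d + 1), deltaVec P d i = Nat.card (box v) := by
  classical
  have := (box_finite hv).fintype
  simp only [deltaVec_eq_natCard hv hP, Nat.card_eq_fintype_card, Fintype.card_subtype]
  rw [← Nat.cast_sum, ← Finset.card_eq_sum_card_fiberwise fun r _ =>
    Finset.mem_range.2 (Nat.lt_succ_of_le (deg_le r.2)), Finset.card_univ]

theorem deltaVec_ne_zero_iff (hv : AffineIndependent ℝ fun j i => (v j i : ℝ))
    {P : Set (Fin N → ℝ)} (hP : P = convexHull ℝ (Set.range fun j i => (v j i : ℝ))) (i : ℕ) :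
    deltaVec P d i ≠ 0 ↔ ∃ r ∈ box v, deg r = i := by
  have := (box_finite hv).to_subtype
  rw [deltaVec_eq_natCard hv hP, Nat.cast_ne_zero, Nat.card_ne_zero, and_iff_left Subtype.finite]
  simp

theorem fractVec_neg_mem_box {r : Fin (d + 1) → ℝ} (hr : r ∈ box v) : fractVec (-r) ∈ box v :=
  fractVec_mem_box (neg_mem hr.1)

theorem fractVec_neg_fractVec_neg {r : Fin (d + 1) → ℝ} (hr : r ∈ box v) :
    fractVec (-fractVec (-r)) = r := by
  ext j
  have h := Int.self_add_fract_neg (hr.2 j)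
  simp only [fractVec, Pi.neg_apply]
  split_ifs at h with h0
  · simp [h0]
  · rw [show -Int.fract (-r j) = r j + (-1 : ℤ) by push_cast; linarith, Int.fract_add_intCast,
      Int.fract_eq_self.2 (hr.2 j)]

theorem deg_add_deg_fractVec_neg {r : Fin (d + 1) → ℝ} (hr : r ∈ box v) :
    deg r + deg (fractVec (-r)) = (Finset.univ.filter fun j => r j ≠ 0).card := by
  have h : (deg r : ℝ) + deg (fractVec (-r)) = (Finset.univ.filter fun j => r j ≠ 0).card := by
    rw [cast_deg hr, cast_deg (fractVec_neg_mem_box hr), ← Finset.sum_add_distrib,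
      Finset.natCast_card_filter]
    refine Finset.sum_congr rfl fun j _ => ?_
    rw [fractVec, Pi.neg_apply, Int.self_add_fract_neg (hr.2 j)]
    by_cases h0 : r j = 0 <;> simp [h0]
  exact_mod_cast h

theorem deg_fractVec_neg {r : Fin (d + 1) → ℝ} (hr : r ∈ box v) (hfull : ∀ j, r j ≠ 0) :
    deg (fractVec (-r)) = d + 1 - deg r := by
  have h := deg_add_deg_fractVec_neg hr
  rw [Finset.filter_true_of_mem fun j _ => hfull j, Finset.card_univ, Fintype.card_fin] at h
  omega

theorem natCard_deg_eq_natCard_deg_sub (hfull : ∀ r ∈ box v, r ≠ 0 → ∀ j, r j ≠ 0) {k : ℕ}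
    (hk : 0 < k) (hkd : k ≤ d) :
    Nat.card {r : box v // deg r.1 = k} = Nat.card {r : box v // deg r.1 = d + 1 - k} := by
  have hdeg : ∀ {r} (hr : r ∈ box v), 0 < deg r → deg (fractVec (-r)) = d + 1 - deg r :=
    fun hr hpos => deg_fractVec_neg hr (hfull _ hr fun h0 => hpos.ne' ((deg_eq_zero_iff hr).2 h0))
  refine Nat.card_congr
    { toFun := fun r => ⟨⟨fractVec (-r.1.1), fractVec_neg_mem_box r.1.2⟩, ?_⟩
      invFun := fun r => ⟨⟨fractVec (-r.1.1), fractVec_neg_mem_box r.1.2⟩, ?_⟩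
      left_inv := fun r => Subtype.ext <| Subtype.ext <| fractVec_neg_fractVec_neg r.1.2
      right_inv := fun r => Subtype.ext <| Subtype.ext <| fractVec_neg_fractVec_neg r.1.2 }
  · rw [hdeg r.1.2 (by rw [r.2]; exact hk), r.2]
  · rw [hdeg r.1.2 (by omega), r.2]
    omega

theorem forall_ne_zero_of_le_deg {y : Fin (d + 1) → ℝ} (hy : y ∈ box v) (hy0 : y ≠ 0)
    (hmin : ∀ r ∈ box v, r ≠ 0 → d + 1 - deg y ≤ deg r) : ∀ j, y j ≠ 0 := by
  have hz0 : fractVec (-y) ≠ 0 := fun h => hy0 <| by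
    rw [← fractVec_neg_fractVec_neg hy, h]
    ext
    simp [fractVec]
  have hsupp := deg_add_deg_fractVec_neg hy
  have hle := hmin _ (fractVec_neg_mem_box hy) hz0
  have hcard : (Finset.univ.filter fun j => y j ≠ 0).card = Fintype.card (Fin (d + 1)) :=
    le_antisymm (Finset.card_le_univ _) (by have := deg_le hy; rw [Fintype.card_fin]; omega)
  intro j
  have hj : j ∈ Finset.univ.filter fun j => y j ≠ 0 := by
    rw [Finset.eq_univ_of_card _ hcard]
    exact Finset.mem_univ j
  exact (Finset.mem_filter.1 hj).2

/-- With addition modulo `ℤ^(d+1)` the box points form a group, realised here as the image `H` of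
`coordLattice v` in the torus `(ℝ/ℤ)^(d+1)`; its coordinate projections are homomorphisms. -/
theorem forall_ne_zero_of_prime_natCard (hp : (Nat.card (box v)).Prime) {y : Fin (d + 1) → ℝ}
    (hy : y ∈ box v) (hyfull : ∀ j, y j ≠ 0) {r : Fin (d + 1) → ℝ} (hr : r ∈ box v)
    (hr0 : r ≠ 0) (j : Fin (d + 1)) : r j ≠ 0 := by
  let π : (Fin (d + 1) → ℝ) →+ (Fin (d + 1) → AddCircle (1 : ℝ)) :=
    AddMonoidHom.compLeft (QuotientAddGroup.mk' _) _
  have hinj : Set.InjOn π (box v) := fun a ha b hb h => funext fun k => by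
    have hk : (a k : AddCircle (1 : ℝ)) = b k := congrFun h k
    rwa [AddCircle.coe_eq_coe_iff_of_mem_Ico (a := 0) (by simpa using ha.2 k)
      (by simpa using hb.2 k)] at hk
  let H := (coordLattice v).map π
  have himage : (H : Set _) = π '' box v := by
    refine (AddSubgroup.coe_map _ _).trans
      (Set.Subset.antisymm ?_ (Set.image_mono fun r hr => hr.1))
    rintro _ ⟨l, hl, rfl⟩
    exact ⟨fractVec l, fractVec_mem_box hl, funext fun k => AddCircle.coe_fract _⟩
  have hcard : Nat.card H = Nat.card (box v) := by
    change Nat.card (H : Set (Fin (d + 1) → AddCircle (1 : ℝ))) = _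
    rw [Nat.card_coe_set_eq, himage, hinj.ncard_image, Nat.card_coe_set_eq]
  have hf := AddMonoidHom.map_ne_zero_of_prime_card (hcard ▸ hp)
    ((Pi.evalAddMonoidHom (fun _ => AddCircle (1 : ℝ)) j).comp H.subtype)
    (g := ⟨π y, AddSubgroup.mem_map_of_mem π hy.1⟩) (h := ⟨π r, AddSubgroup.mem_map_of_mem π hr.1⟩)
    ((AddCircle.coe_eq_zero_iff_of_mem_Ico (by simpa using hy.2 j)).not.2 (hyfull j))
    fun h => hr0 (hinj hr zero_mem_box ((congrArg Subtype.val h).trans π.map_zero.symm))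
  exact (AddCircle.coe_eq_zero_iff_of_mem_Ico (by simpa using hr.2 j)).not.1 hf

theorem exists_mem_box_ne_zero (hp : (Nat.card (box v)).Prime) : ∃ r ∈ box v, r ≠ 0 := by
  have := Nat.finite_of_card_ne_zero hp.ne_zero
  have := Finite.one_lt_card_iff_nontrivial.1 hp.one_lt
  obtain ⟨r, hr⟩ := exists_ne (⟨0, zero_mem_box⟩ : box v)
  exact ⟨r.1, r.2, fun h => hr (Subtype.ext h)⟩

theorem exists_mem_box_deg_eq_sSup (hv : AffineIndependent ℝ fun j i => (v j i : ℝ))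
    {P : Set (Fin N → ℝ)} (hP : P = convexHull ℝ (Set.range fun j i => (v j i : ℝ)))
    {r₀ : Fin (d + 1) → ℝ} (hr₀ : r₀ ∈ box v) (hr₀0 : r₀ ≠ 0) :
    ∃ y ∈ box v, y ≠ 0 ∧ deg y = sSup {i | deltaVec P d i ≠ 0} := by
  have hne := deltaVec_ne_zero_iff hv hP
  have hbdd : BddAbove {i | deltaVec P d i ≠ 0} := ⟨d, fun i hi => by
    obtain ⟨r, hr, rfl⟩ := (hne i).1 hi
    exact deg_le hr⟩
  have hr₀le := le_csSup hbdd ((hne _).2 ⟨r₀, hr₀, rfl⟩)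
  obtain ⟨y, hy, hym⟩ := (hne _).1 (Nat.sSup_mem ⟨_, (hne _).2 ⟨r₀, hr₀, rfl⟩⟩ hbdd)
  refine ⟨y, hy, fun hy0 => hr₀0 ((deg_eq_zero_iff hr₀).1 ?_), hym⟩
  rw [← hym, (deg_eq_zero_iff hy).2 hy0] at hr₀le
  omega

end IntegralSimplex

open IntegralSimplex

theorem stmt9 {N d : ℕ} (p : ℕ) (hp : p.Prime)
    (v : Fin (d + 1) → Fin N → ℤ)
    (hv : AffineIndependent ℝ (fun j => fun i => ((v j i : ℤ) : ℝ)))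
    (P : Set (Fin N → ℝ))
    (hP : P = convexHull ℝ (Set.range fun j => fun i => ((v j i : ℤ) : ℝ)))
    (hvol : ∑ i ∈ Finset.range (d + 1), deltaVec P d i = (p : ℤ))
    (hmm : sInf {i : ℕ | 0 < i ∧ deltaVec P d i ≠ 0} =
      d + 1 - sSup {i : ℕ | deltaVec P d i ≠ 0}) :
    ∀ i ≤ (d - 1) / 2, deltaVec P d (d - i) = deltaVec P d (i + 1) := by
  have hcard : (Nat.card (box v)).Prime := by
    rwa [Nat.cast_inj.1 ((sum_deltaVec_eq_natCard_box hv hP).symm.trans hvol)]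
  obtain ⟨r₀, hr₀, hr₀0⟩ := exists_mem_box_ne_zero hcard
  obtain ⟨y, hy, hy0, hym⟩ := exists_mem_box_deg_eq_sSup hv hP hr₀ hr₀0
  have hmin : ∀ r ∈ box v, r ≠ 0 → d + 1 - deg y ≤ deg r := fun r hr hr0 => by
    rw [hym, ← hmm]
    exact Nat.sInf_le ⟨Nat.pos_of_ne_zero ((deg_eq_zero_iff hr).not.2 hr0),
      (deltaVec_ne_zero_iff hv hP _).2 ⟨r, hr, rfl⟩⟩
  have hfull : ∀ r ∈ box v, r ≠ 0 → ∀ j, r j ≠ 0 := fun r hr hr0 =>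
    forall_ne_zero_of_prime_natCard hcard hy (forall_ne_zero_of_le_deg hy hy0 hmin) hr hr0
  have hd : 1 ≤ d := (Nat.pos_of_ne_zero ((deg_eq_zero_iff hr₀).not.2 hr₀0)).trans_le (deg_le hr₀)
  intro i hi
  rw [deltaVec_eq_natCard hv hP, deltaVec_eq_natCard hv hP,
    natCard_deg_eq_natCard_deg_sub hfull (k := i + 1) (by omega) (by omega),
    show d + 1 - (i + 1) = d - i by omega]
end
end

section
/- Let d = m + n with gcd(m,n) = 1, and let P be the (0,1)-simplex with vertices v_0 = 0 and v_i = e_i + ... + e_{i+m−1} (cyclically) for 1 ≤ i ≤ d. Then the δ-vector of P is shifted symmetric: δ_{d−i} = δ_{i+1} for all 0 ≤ i ≤ ⌊(d−1)/2⌋. -/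
open scoped BigOperators Pointwise

noncomputable section

/-!
Write `h k = ⌈k d / m⌉`. A point of `j P` is `∑ sᵢ vᵢ` with `s ≥ 0`, `∑ sᵢ ≤ j`, and its
`q`-th coordinate is the window sum `∑_{r < m} s_{q-r}`; consecutive window sums differ by
`s_q - s_{q-m}`. As `m` generates `ℤ/d`, integrality forces all `sᵢ` to share one fractional
part `k/m` with `0 ≤ k < m`, and the same argument shows the `vᵢ` are linearly independent.
Counting the integer parts gives `i(P, j) = ∑_{k<m} C(j + d - h k, d)`, so that
`δᵢ = #{k < m | h k = i}`. Since `m ∤ k d` for `0 < k < m`, `h (m - k) = d + 1 - h k`, and this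
involution is the shifted symmetry.
-/

section DeltaVector
open PowerSeries

theorem PowerSeries.coeff_one_sub_X_pow_s13 {R : Type*} [CommRing R] (N k : ℕ) :
    coeff k ((1 - X : R⟦X⟧) ^ N) = (-1) ^ k * N.choose k := by
  have h : (1 - X : R⟦X⟧) ^ N = rescale (-1) (((1 + Polynomial.X) ^ N : Polynomial R) : R⟦X⟧) := by
    simp [rescale_X, sub_eq_add_neg]
  rw [h, coeff_rescale, Polynomial.coeff_coe, Polynomial.coeff_one_add_X_pow]

theorem PowerSeries.mk_choose_add_sub {R : Type*} [CommRing R] {d h : ℕ} (hh : h ≤ d) :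
    mk (fun j => ((j + d - h).choose d : R)) = X ^ h * mk (fun j => ((d + j).choose d : R)) := by
  ext j
  rw [coeff_mk, coeff_X_pow_mul', coeff_mk]
  split_ifs with hj
  · congr 2; omega
  · rw [Nat.choose_eq_zero_of_lt (by omega), Nat.cast_zero]

theorem deltaVec_eq_coeff {N : ℕ} (P : Set (Fin N → ℝ)) (d i : ℕ) :
    deltaVec P d i = coeff i (mk (ehrhart P) * (1 - X) ^ (d + 1)) := by
  rw [deltaVec, coeff_mul, Finset.Nat.sum_antidiagonal_eq_sum_range_succ_mk]
  refine Finset.sum_congr rfl fun j _ => ?_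
  rw [coeff_mk, coeff_one_sub_X_pow_s13]
  ring

theorem deltaVec_eq_card_filter {N : ℕ} {P : Set (Fin N → ℝ)} {d : ℕ} {ι : Type*}
    (s : Finset ι) (h : ι → ℕ) (hh : ∀ k ∈ s, h k ≤ d)
    (hP : ∀ j, ehrhart P j = ∑ k ∈ s, ((j + d - h k).choose d : ℤ)) (i : ℕ) :
    deltaVec P d i = (s.filter (h · = i)).card := by
  have hseries : mk (ehrhart P) = ∑ k ∈ s, X ^ h k * mk fun j => ((d + j).choose d : ℤ) := by
    rw [← Finset.sum_congr rfl fun k hk => mk_choose_add_sub (hh k hk)]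
    ext j
    simp [hP, map_sum]
  rw [deltaVec_eq_coeff, hseries, Finset.sum_mul]
  simp_rw [mul_assoc, mk_add_choose_mul_one_sub_pow_eq_one, mul_one, map_sum, coeff_X_pow]
  rw [Finset.sum_boole]
  simp [eq_comm]

end DeltaVector

open Finset

theorem Nat.ceilDiv_eq_div_add_one_of_not_dvd {x m : ℕ} (hm : 0 < m) (hx : ¬ m ∣ x) :
    x ⌈/⌉ m = x / m + 1 := by
  have hmod : x % m ≠ 0 := fun h => hx (Nat.dvd_of_mod_eq_zero h)
  have hdiv := Nat.div_add_mod x m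
  have hlt := Nat.mod_lt x hm
  refine le_antisymm ((ceilDiv_le_iff_le_mul hm).2 ?_) (Nat.lt_of_not_le fun h => ?_)
  · rw [Nat.mul_succ]; omega
  · rw [ceilDiv_le_iff_le_mul hm] at h; omega

theorem Nat.ceilDiv_mul_sub_add_ceilDiv {x m d : ℕ} (hm : 0 < m) (hx : ¬ m ∣ x)
    (hxd : x ≤ m * d) : (m * d - x) ⌈/⌉ m + x ⌈/⌉ m = d + 1 := by
  have hmod : x % m ≠ 0 := fun h => hx (Nat.dvd_of_mod_eq_zero h)
  have hdiv := Nat.div_add_mod x m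
  have hlt := Nat.mod_lt x hm
  have hqd : x / m < d := Nat.lt_of_mul_lt_mul_left (a := m) (by omega)
  have hsub : (m * d - x) ⌈/⌉ m = d - x / m := by
    have h1 : m * (d - x / m) = m * d - m * (x / m) := Nat.mul_sub m d _
    have h2 : m * (d - x / m - 1) = m * d - m * (x / m) - m := by
      rw [Nat.mul_sub, h1, Nat.mul_one]
    have h3 : m * (x / m) + m ≤ m * d := by
      simpa [Nat.mul_succ] using Nat.mul_le_mul_left m (Nat.succ_le_of_lt hqd)
    refine le_antisymm ((ceilDiv_le_iff_le_mul hm).2 (by rw [h1]; omega)) (Nat.le_of_pred_lt ?_)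
    refine Nat.lt_of_not_le fun h => ?_
    rw [ceilDiv_le_iff_le_mul hm, Nat.pred_eq_sub_one, h2] at h
    omega
  rw [hsub, Nat.ceilDiv_eq_div_add_one_of_not_dvd hm hx]
  omega

theorem Nat.sub_mul_ceilDiv_of_coprime {m d k : ℕ} (hcd : Nat.Coprime m d) (hk : 0 < k)
    (hkm : k < m) : (m - k) * d ⌈/⌉ m = d + 1 - k * d ⌈/⌉ m := by
  have hdvd : ¬ m ∣ k * d := fun h =>
    absurd (Nat.le_of_dvd hk (hcd.dvd_of_dvd_mul_right h)) (by omega)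
  have := Nat.ceilDiv_mul_sub_add_ceilDiv (by omega) hdvd (Nat.mul_le_mul_right d hkm.le)
  rw [← Nat.sub_mul] at this
  omega

theorem card_filter_ceilDiv_eq_symm {m d t : ℕ} (hcd : Nat.Coprime m d) (ht : 0 < t)
    (htd : t ≤ d) :
    #{k ∈ range m | k * d ⌈/⌉ m = t} = #{k ∈ range m | k * d ⌈/⌉ m = d + 1 - t} := by
  have reflect : ∀ t, 0 < t → ∀ k, k < m → k * d ⌈/⌉ m = t →
      0 < k ∧ (m - k) * d ⌈/⌉ m = d + 1 - t := by
    intro t ht k hk hkt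
    have hk0 : 0 < k := Nat.pos_of_ne_zero (by rintro rfl; simp at hkt; omega)
    exact ⟨hk0, hkt ▸ Nat.sub_mul_ceilDiv_of_coprime hcd hk0 hk⟩
  refine card_nbij' (m - ·) (m - ·) (fun k hk => ?_) (fun k hk => ?_) (fun k hk => ?_)
    (fun k hk => ?_)
  all_goals simp only [coe_filter, Set.mem_ofPred_eq, mem_range] at hk ⊢
  · have := reflect t ht k hk.1 hk.2
    exact ⟨by omega, this.2⟩
  · have := reflect (d + 1 - t) (by omega) k hk.1 hk.2
    exact ⟨by omega, by omega⟩
  · have := reflect t ht k hk.1 hk.2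
    omega
  · have := reflect (d + 1 - t) (by omega) k hk.1 hk.2
    omega

theorem Nat.add_ceilDiv_le_iff {m A x j : ℕ} (hm : 0 < m) :
    A + x ⌈/⌉ m ≤ j ↔ m * A + x ≤ m * j := by
  constructor
  · intro h
    have := (ceilDiv_le_iff_le_mul hm).1 (le_tsub_of_add_le_left h)
    rw [Nat.mul_sub] at this
    have : m * A ≤ m * j := Nat.mul_le_mul_left m (by omega)
    omega
  · intro h
    have hAj : A ≤ j := Nat.le_of_mul_le_mul_left (by omega) hm
    have : x ⌈/⌉ m ≤ j - A := (ceilDiv_le_iff_le_mul hm).2 (by rw [Nat.mul_sub]; omega)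
    omega

theorem sum_natCast_add_div_le_iff {d m : ℕ} (hm : 0 < m) (a : Fin d → ℕ) (k j : ℕ) :
    ∑ i, ((a i : ℝ) + k / m) ≤ j ↔ ∑ i, a i + k * d ⌈/⌉ m ≤ j := by
  rw [Nat.add_ceilDiv_le_iff hm, ← Nat.cast_le (α := ℝ), sum_add_distrib, sum_const, card_univ,
    Fintype.card_fin, nsmul_eq_mul, ← mul_le_mul_iff_of_pos_left (by positivity : (0 : ℝ) < m)]
  push_cast
  field_simp

theorem natCast_add_div_inj {m a a' k k' : ℕ} (hk : k < m) (hk' : k' < m)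
    (h : (a : ℝ) + k / m = a' + k' / m) : a = a' ∧ k = k' := by
  have hm : 0 < m := by omega
  have h' : m * a + k = m * a' + k' := by
    field_simp at h
    exact_mod_cast (by linarith : (m * a + k : ℝ) = m * a' + k')
  have h1 := congrArg (· / m) h'
  have h2 := congrArg (· % m) h'
  simp only [Nat.mul_add_div hm, Nat.div_eq_of_lt hk, Nat.div_eq_of_lt hk', Nat.mul_add_mod,
    Nat.mod_eq_of_lt hk, Nat.mod_eq_of_lt hk'] at h1 h2
  omega

def sumLeEquivSumEq (D M : ℕ) :
    {a : Fin D → ℕ // ∑ i, a i ≤ M} ≃ {b : Option (Fin D) → ℕ // ∑ i, b i = M} where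
  toFun a := ⟨fun o => o.elim (M - ∑ i, a.1 i) a.1, by
    have := a.2; simp only [Fintype.sum_option, Option.elim]; omega⟩
  invFun b := ⟨fun i => b.1 (some i), by
    have := b.2; rw [Fintype.sum_option] at this; dsimp only; omega⟩
  left_inv a := rfl
  right_inv b := by
    obtain ⟨b, hb⟩ := b
    rw [Fintype.sum_option] at hb
    ext (_ | i)
    · simp only [Option.elim]; omega
    · rfl

theorem mem_filter_piFinset_sum_add_le_iff {D c j : ℕ} (a : Fin D → ℕ) :
    a ∈ {a ∈ Fintype.piFinset fun _ : Fin D => range (j + 1) | ∑ i, a i + c ≤ j} ↔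
      ∑ i, a i + c ≤ j := by
  simp only [mem_filter, Fintype.mem_piFinset, mem_range, and_iff_right_iff_imp]
  intro h i
  have := single_le_sum (fun i _ => Nat.zero_le (a i)) (mem_univ i)
  omega

theorem card_filter_sum_add_le {D : ℕ} (hD : 0 < D) (c j : ℕ) :
    #{a ∈ Fintype.piFinset fun _ : Fin D => range (j + 1) | ∑ i, a i + c ≤ j} =
      (j + D - c).choose D := by
  rcases lt_or_ge j c with hjc | hcj
  · rw [Nat.choose_eq_zero_of_lt (show j + D - c < D by omega), card_eq_zero, filter_eq_empty_iff]
    intro a _ h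
    omega
  have hmem (a : Fin D → ℕ) := (mem_filter_piFinset_sum_add_le_iff (c := c) (j := j) a).trans
    (show _ ↔ ∑ i, a i ≤ j - c by omega)
  rw [← Nat.card_eq_finsetCard, Nat.card_congr ((Equiv.subtypeEquivRight hmem).trans
    ((sumLeEquivSumEq D (j - c)).trans (Sym.equivNatSumOfFintype _ _).symm)),
    Sym.natCard_sym_eq_choose, Nat.card_eq_fintype_card, Fintype.card_option,
    Fintype.card_fin, show D + 1 + (j - c) - 1 = D + (j - c) by omega,
    show j + D - c = D + (j - c) by omega, Nat.choose_symm_add]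

section ConvexHull
variable {ι E : Type*} [Fintype ι] [AddCommGroup E] [Module ℝ E]

theorem convexHull_zero_union_range_eq (v : ι → E) :
    convexHull ℝ ({0} ∪ Set.range v) =
      Fintype.linearCombination ℝ v '' {s | 0 ≤ s ∧ ∑ i, s i ≤ 1} := by
  classical
  apply Set.Subset.antisymm
  · refine convexHull_min ?_ (Convex.linear_image ?_ _)
    · rintro _ (rfl | ⟨i, rfl⟩)
      · exact ⟨0, by simp⟩
      · exact ⟨Pi.single i 1, ⟨Pi.single_nonneg.2 zero_le_one, by simp⟩, by simp⟩
    · exact (convex_Ici 0).inter (convex_halfSpace_le (f := fun s : ι → ℝ => ∑ i, s i)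
        ⟨fun s s' => sum_add_distrib, fun c s => by simp [mul_sum]⟩ 1)
  · rintro _ ⟨s, ⟨hs0, hs1⟩, rfl⟩
    refine mem_convexHull_of_exists_fintype (fun o : Option ι => o.elim (1 - ∑ i, s i) s)
      (fun o => o.elim 0 v) (fun o => ?_) ?_ (fun o => ?_) ?_
    · cases o
      · simpa using hs1
      · exact hs0 _
    · simp [Fintype.sum_option]
    · cases o <;> simp
    · simp [Fintype.sum_option, Fintype.linearCombination_apply]

theorem smul_setOf_nonneg_sum_le_one {t : ℝ} (ht : 0 ≤ t) :
    t • {s : ι → ℝ | 0 ≤ s ∧ ∑ i, s i ≤ 1} = {s | 0 ≤ s ∧ ∑ i, s i ≤ t} := by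
  rcases ht.eq_or_lt with rfl | ht
  · rw [Set.zero_smul_set ⟨0, by simp⟩]
    ext s
    simp only [Set.mem_ofPred_eq]
    refine ⟨by rintro rfl; simp, fun ⟨hs0, hs⟩ => ?_⟩
    have := (sum_eq_zero_iff_of_nonneg fun i _ => hs0 i).1
      (hs.antisymm (sum_nonneg fun i _ => hs0 i))
    exact funext fun i => this i (mem_univ i)
  · ext s
    rw [Set.mem_smul_set_iff_inv_smul_mem₀ ht.ne']
    simp only [Set.mem_ofPred_eq, Pi.smul_apply, smul_eq_mul, ← mul_sum, inv_mul_le_one₀ ht,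
      smul_nonneg_iff_nonneg_of_pos_left (inv_pos.2 ht)]

theorem mem_smul_convexHull_zero_union_range_iff (v : ι → E) {t : ℝ} (ht : 0 ≤ t) (y : E) :
    y ∈ t • convexHull ℝ ({0} ∪ Set.range v) ↔
      ∃ s : ι → ℝ, 0 ≤ s ∧ ∑ i, s i ≤ t ∧ ∑ i, s i • v i = y := by
  rw [convexHull_zero_union_range_eq, ← image_smul_set, smul_setOf_nonneg_sum_le_one ht]
  simp [Fintype.linearCombination_apply, and_assoc]

end ConvexHull

open Fin.CommRing

theorem Function.Periodic.eq_of_coprime {α : Type*} {d m : ℕ} [NeZero d] {f : Fin d → α}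
    (hf : Function.Periodic f (m : Fin d)) (hcd : Nat.Coprime m d) (p q : Fin d) :
    f p = f q := by
  rcases (Nat.one_le_iff_ne_zero.2 (NeZero.ne d)).lt_or_eq with hd | rfl
  · obtain ⟨e, -, he⟩ := Nat.exists_mul_mod_eq_one_of_coprime hcd hd
    have hunit : (((q - p).val * e : ℕ) : Fin d) * m = q - p := by
      rw [← Nat.cast_mul, Fin.ext_iff, Fin.val_natCast, mul_assoc, Nat.mul_mod, mul_comm e, he,
        mul_one, Nat.mod_mod, Nat.mod_eq_of_lt (Fin.is_lt _)]
    rw [← (hf.nat_mul _) p, hunit, add_sub_cancel]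
  · exact Subsingleton.elim p q ▸ rfl

section CyclicWindow
variable {d : ℕ} [NeZero d]

def cyclicWindow (m : ℕ) (i : Fin d) : Fin d → ℝ := fun q => if (q - i).val < m then 1 else 0

def cyclicSimplex (d m : ℕ) [NeZero d] : Set (Fin d → ℝ) :=
  convexHull ℝ ({0} ∪ Set.range (cyclicWindow m))

def windowSum {M : Type*} [AddCommMonoid M] (m : ℕ) (s : Fin d → M) (q : Fin d) : M :=
  ∑ r ∈ range m, s (q - (r : Fin d))

theorem sum_smul_cyclicWindow {m : ℕ} (hmd : m ≤ d) (s : Fin d → ℝ) :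
    ∑ i, s i • cyclicWindow m i = windowSum m s := by
  funext q
  simp only [Finset.sum_apply, Pi.smul_apply, cyclicWindow, smul_eq_mul, mul_ite, mul_one,
    mul_zero, ← sum_filter, windowSum]
  have hval : ∀ r ∈ range m, (q - (q - (r : Fin d))).val = r := fun r hr => by
    rw [sub_sub_cancel, Fin.val_natCast, Nat.mod_eq_of_lt (by simp at hr; omega)]
  refine sum_nbij' (fun i => (q - i).val) (fun r : ℕ => q - (r : Fin d)) (fun i hi => ?_)
    (fun r hr => ?_) (fun i _ => by simp) (fun r hr => hval r hr) (fun i _ => by simp)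
  · simpa using hi
  · rw [mem_filter, hval r hr]
    exact ⟨mem_univ _, by simpa using hr⟩

theorem windowSum_sub_windowSum_sub_one {M : Type*} [AddCommGroup M] (m : ℕ) (s : Fin d → M)
    (q : Fin d) : windowSum m s q - windowSum m s (q - 1) = s q - s (q - m) := by
  have h := (sum_range_succ' (fun r : ℕ => s (q - r)) m).symm.trans
    (sum_range_succ (fun r : ℕ => s (q - r)) m)
  simp only [Nat.cast_add, Nat.cast_one, Nat.cast_zero, sub_zero, sub_add_eq_sub_sub] at h
  simp only [windowSum, sub_eq_sub_iff_add_eq_add, sub_right_comm q (1 : Fin d)]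
  rw [add_comm (s q)]
  exact h.symm

theorem windowSum_injective {m : ℕ} (hm : 0 < m) (hcd : Nat.Coprime m d) :
    Function.Injective (windowSum m : (Fin d → ℝ) → Fin d → ℝ) := by
  intro s s' h
  have hsub : windowSum m (s - s') = 0 := by
    funext q
    simpa [windowSum, sum_sub_distrib, sub_eq_zero] using congrFun h q
  have hper : Function.Periodic (s - s') m := fun p => by
    simpa [hsub, sub_eq_zero, eq_comm] using windowSum_sub_windowSum_sub_one m (s - s') (p + m)
  have hconst : ∀ p, s p - s' p = s 0 - s' 0 := fun p => by
    simpa using hper.eq_of_coprime hcd p 0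
  have h0 := congrFun hsub 0
  simp only [windowSum, Pi.sub_apply, hconst, sum_const, card_range, nsmul_eq_mul,
    Pi.zero_apply] at h0
  have : s 0 - s' 0 = 0 := (mul_eq_zero.1 h0).resolve_left (by positivity)
  funext p
  linarith [hconst p]

theorem exists_eq_natCast_add_div_of_windowSum_eq {m : ℕ} (hm : 0 < m) (hcd : Nat.Coprime m d)
    {s : Fin d → ℝ} (hs : 0 ≤ s) {x : Fin d → ℤ} (hx : windowSum m s = fun q => (x q : ℝ)) :
    ∃ k < m, ∃ a : Fin d → ℕ, s = fun p => (a p : ℝ) + k / m := by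
  have hper : Function.Periodic (fun p => Int.fract (s p)) m := fun p => by
    refine Int.fract_eq_fract.2 ⟨x (p + m) - x (p + m - 1), ?_⟩
    have := windowSum_sub_windowSum_sub_one m s (p + m)
    rw [hx, add_sub_cancel_right] at this
    push_cast
    exact this.symm
  have hfract : ∀ p, Int.fract (s p) = Int.fract (s 0) := fun p => hper.eq_of_coprime hcd p 0
  set K : ℤ := x 0 - ∑ r ∈ range m, ⌊s (0 - r)⌋
  have hK : (K : ℝ) = m * Int.fract (s 0) := by
    have h0 := congrFun hx 0
    simp only [windowSum] at h0
    simp only [K, Int.cast_sub, ← h0, Int.cast_sum, ← sum_sub_distrib, Int.self_sub_floor, hfract,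
      sum_const, card_range, nsmul_eq_mul]
  have hK0 : 0 ≤ K := by
    have : (0 : ℝ) ≤ K := hK ▸ by positivity
    exact_mod_cast this
  have hKm : K < m := by
    have : (K : ℝ) < m := hK ▸ mul_lt_of_lt_one_right (by positivity) (Int.fract_lt_one _)
    exact_mod_cast this
  lift K to ℕ using hK0 with k
  have hk : Int.fract (s 0) = k / m := by
    rw [eq_div_iff (by positivity), mul_comm, ← hK, Int.cast_natCast]
  refine ⟨k, by exact_mod_cast hKm, fun p => ⌊s p⌋₊, funext fun p => ?_⟩
  rw [natCast_floor_eq_intCast_floor (hs p), ← hk, ← hfract p, Int.floor_add_fract]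

def windowPoint (m : ℕ) (p : (_ : ℕ) × (Fin d → ℕ)) : Fin d → ℤ :=
  fun q => windowSum m (fun i => (p.2 i : ℤ)) q + p.1

theorem intCast_windowPoint {m : ℕ} (hm : 0 < m) (p : (_ : ℕ) × (Fin d → ℕ)) :
    (fun q => (windowPoint m p q : ℝ)) = windowSum m (fun i => (p.2 i : ℝ) + p.1 / m) := by
  funext q
  simp [windowPoint, windowSum, sum_add_distrib]
  field_simp

theorem mem_latticePoints_smul_cyclicSimplex_iff {m : ℕ} (hmd : m ≤ d) (j : ℕ)
    (x : Fin d → ℤ) :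
    x ∈ latticePoints ((j : ℝ) • cyclicSimplex d m) ↔
      ∃ s : Fin d → ℝ, 0 ≤ s ∧ ∑ i, s i ≤ j ∧ windowSum m s = fun q => (x q : ℝ) := by
  simp only [cyclicSimplex, latticePoints, Set.mem_ofPred_eq,
    mem_smul_convexHull_zero_union_range_iff _ (Nat.cast_nonneg j), sum_smul_cyclicWindow hmd]

theorem latticePoints_smul_cyclicSimplex_eq_image {m : ℕ} (hm : 0 < m) (hmd : m ≤ d)
    (hcd : Nat.Coprime m d) (j : ℕ) :
    latticePoints ((j : ℝ) • cyclicSimplex d m) =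
      ↑(((range m).sigma fun k => {a ∈ Fintype.piFinset fun _ : Fin d => range (j + 1) |
        ∑ i, a i + k * d ⌈/⌉ m ≤ j}).image (windowPoint m)) := by
  ext x
  simp only [mem_latticePoints_smul_cyclicSimplex_iff hmd, coe_image, Set.mem_image, mem_coe,
    mem_sigma, mem_range, mem_filter_piFinset_sum_add_le_iff, Sigma.exists]
  constructor
  · rintro ⟨s, hs0, hsj, hsx⟩
    obtain ⟨k, hk, a, rfl⟩ := exists_eq_natCast_add_div_of_windowSum_eq hm hcd hs0 hsx
    refine ⟨k, a, ⟨hk, (sum_natCast_add_div_le_iff hm a k j).1 hsj⟩, funext fun q => ?_⟩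
    exact_mod_cast congrFun ((intCast_windowPoint hm ⟨k, a⟩).trans hsx) q
  · rintro ⟨k, a, ⟨hk, hkj⟩, rfl⟩
    exact ⟨_, fun i => by positivity, (sum_natCast_add_div_le_iff hm a k j).2 hkj,
      (intCast_windowPoint hm ⟨k, a⟩).symm⟩

theorem injOn_windowPoint {m : ℕ} (hm : 0 < m) (hcd : Nat.Coprime m d)
    (t : ℕ → Finset (Fin d → ℕ)) :
    Set.InjOn (windowPoint m) ((range m).sigma t : Set ((_ : ℕ) × (Fin d → ℕ))) := by
  rintro ⟨k, a⟩ hp ⟨k', a'⟩ hp' h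
  simp only [coe_sigma, Set.mem_sigma_iff, coe_range, Set.mem_Iio] at hp hp'
  have hs := windowSum_injective hm hcd <| (intCast_windowPoint hm _).symm.trans <|
    (congrArg (fun x q => (x q : ℝ)) h).trans (intCast_windowPoint hm _)
  have hak := fun i => natCast_add_div_inj hp.1 hp'.1 (congrFun hs i)
  obtain rfl : k = k' := (hak 0).2
  obtain rfl : a = a' := funext fun i => (hak i).1
  rfl

theorem ehrhart_cyclicSimplex {m : ℕ} (hm : 0 < m) (hmd : m ≤ d) (hcd : Nat.Coprime m d)
    (j : ℕ) :
    ehrhart (cyclicSimplex d m) j = ∑ k ∈ range m, ((j + d - k * d ⌈/⌉ m).choose d : ℤ) := by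
  rw [ehrhart, latticePoints_smul_cyclicSimplex_eq_image hm hmd hcd, Set.ncard_coe_finset,
    card_image_of_injOn (injOn_windowPoint hm hcd _), card_sigma]
  push_cast
  exact sum_congr rfl fun k _ => by rw [card_filter_sum_add_le (NeZero.pos d)]

end CyclicWindow

theorem stmt13 (m n d : ℕ) (hm : 0 < m) (hn : 0 < n) (hd : d = m + n)
    (hgcd : Nat.gcd m n = 1)
    (v : Fin d → Fin d → ℤ)
    (hv : ∀ i j : Fin d, v i j = if (j.val + d - i.val) % d < m then 1 else 0)
    (P : Set (Fin d → ℝ))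
    (hP : P = convexHull ℝ
      ({0} ∪ Set.range fun i : Fin d => fun j => ((v i j : ℤ) : ℝ))) :
    ∀ i ≤ (d - 1) / 2, deltaVec P d (d - i) = deltaVec P d (i + 1) := by
  intro i hi
  have : NeZero d := ⟨by omega⟩
  have hcd : Nat.Coprime m d := hd ▸ Nat.coprime_self_add_right.2 hgcd
  have hP' : P = cyclicSimplex d m := by
    rw [hP, cyclicSimplex]
    congr! with i q
    rw [hv, cyclicWindow, Fin.val_sub, show q.val + d - i.val = d - i.val + q.val by omega]
    split_ifs <;> norm_num
  have hδ := deltaVec_eq_card_filter (range m) (fun k => k * d ⌈/⌉ m)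
    (fun k hk => (ceilDiv_le_iff_le_mul hm).2 (Nat.mul_le_mul_right d (mem_range.1 hk).le))
    (hP' ▸ ehrhart_cyclicSimplex hm (by omega) hcd)
  rw [hδ, hδ, card_filter_ceilDiv_eq_symm hcd (t := i + 1) (by omega) (by omega),
    Nat.add_sub_add_right]
end
end
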